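/- arXiv:1910.03016 — 4 statements merged into one kernel-verified Lean document; each statement's English description precedes it below -/
import Mathlib

section
/- For any integer n > 2 and real ε ∈ (0,1), there exists a set of n unit vectors p₀, ..., p_{n-1} in ℝ^d with d = ⌈8 ln n / ε²⌉ such that every vector has Euclidean norm 1 and for any i ≠ j, the absolute value of the inner product ⟨p_i, p_j⟩ is at most ε. -/
/-!
The vectors `v i = z i / √d` built from sign vectors `z i ∈ {±1}^d` are unit vectors with
`⟪v i, v j⟫ = (∑ₖ (z i * z j) k) / d`. A Chernoff bound (exponential Markov inequality with the
moment generating function `(2 cosh t)^d ≤ 2^d e^{d t²/2}`) shows that at most a fraction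
`2 e^{-ε² d/2} ≤ 2/n⁴` (as `d ≥ 8 ln n / ε²`) of all sign vectors have `|∑ₖ z k| ≥ ε d`.
For `i ≠ j` the map `z ↦ z i * z j` hits every sign vector equally often, so a union bound over
the fewer than `n²` pairs leaves a fraction `< 2/n² < 1` of bad tuples: a good tuple exists.
-/

open Finset Real
open scoped RealInnerProductSpace

section SignVectors

variable {κ : Type*} [Fintype κ]

-- Signs are modelled by the group `ℤˣ = {1, -1}`, so products of sign vectors are group products.
noncomputable def signSum (z : κ → ℤˣ) : ℝ := ∑ k, ((z k : ℤ) : ℝ)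

noncomputable def signVector (z : κ → ℤˣ) : EuclideanSpace ℝ κ :=
  (√(Fintype.card κ))⁻¹ • WithLp.toLp 2 fun k => ((z k : ℤ) : ℝ)

theorem sum_exp_mul_signSum [DecidableEq κ] (t : ℝ) :
    ∑ z : κ → ℤˣ, exp (t * signSum z) = (2 * cosh t) ^ Fintype.card κ := by
  have hsum : ∑ u : ℤˣ, exp (t * ((u : ℤ) : ℝ)) = 2 * cosh t := by
    rw [UnitsInt.univ, sum_pair (units_ne_neg_self 1), cosh_eq]
    push_cast
    rw [mul_one, mul_neg_one]
    ring
  simp_rw [signSum, mul_sum, exp_sum,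
    ← Fintype.prod_sum fun (_ : κ) (u : ℤˣ) => exp (t * ((u : ℤ) : ℝ)), hsum, prod_const,
    card_univ]

theorem card_filter_le_abs_signSum_mul_exp_le [DecidableEq κ] (a : ℝ) {t : ℝ} (ht : 0 ≤ t) :
    #{z : κ → ℤˣ | a ≤ |signSum z|} * exp (t * a) ≤ 2 * (2 * cosh t) ^ Fintype.card κ := by
  have hexp_abs (x : ℝ) : exp (t * |x|) ≤ exp (t * x) + exp (-t * x) := by
    rcases abs_choice x with h | h <;> rw [h] <;> simp [(exp_pos _).le]
  calc (#{z : κ → ℤˣ | a ≤ |signSum z|} : ℝ) * exp (t * a)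
      ≤ ∑ z ∈ {z : κ → ℤˣ | a ≤ |signSum z|}, exp (t * |signSum z|) := by
        rw [← nsmul_eq_mul]
        exact card_nsmul_le_sum _ _ _ fun z hz =>
          exp_le_exp.2 (mul_le_mul_of_nonneg_left (mem_filter.1 hz).2 ht)
    _ ≤ ∑ z : κ → ℤˣ, exp (t * |signSum z|) :=
        sum_le_sum_of_subset_of_nonneg (filter_subset _ _) fun _ _ _ => (exp_pos _).le
    _ ≤ ∑ z : κ → ℤˣ, (exp (t * signSum z) + exp (-t * signSum z)) :=
        sum_le_sum fun z _ => hexp_abs _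
    _ = 2 * (2 * cosh t) ^ Fintype.card κ := by
        rw [sum_add_distrib, sum_exp_mul_signSum, sum_exp_mul_signSum, cosh_neg]
        ring

theorem card_filter_le_abs_signSum_le [DecidableEq κ] {ε : ℝ} (hε : 0 ≤ ε) :
    (#{z : κ → ℤˣ | ε * Fintype.card κ ≤ |signSum z|} : ℝ) ≤
      2 * 2 ^ Fintype.card κ * exp (-(ε ^ 2 * Fintype.card κ / 2)) := by
  set d := Fintype.card κ
  have hmgf : (2 * cosh ε) ^ d ≤ 2 ^ d * exp (ε ^ 2 * d / 2) := by
    calc (2 * cosh ε) ^ d ≤ (2 * exp (ε ^ 2 / 2)) ^ d := by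
          gcongr
          exact cosh_le_exp_half_sq ε
      _ = 2 ^ d * exp (ε ^ 2 * d / 2) := by
          rw [mul_pow, ← exp_nat_mul]
          ring_nf
  have h := card_filter_le_abs_signSum_mul_exp_le (κ := κ) (ε * d) hε
  rw [← le_div_iff₀ (exp_pos _)] at h
  calc _ ≤ _ := h
    _ ≤ 2 * (2 ^ d * exp (ε ^ 2 * d / 2)) / exp (ε * (ε * d)) := by gcongr
    _ = _ := by
        rw [mul_div_assoc, mul_div_assoc, ← exp_sub]
        ring_nf

theorem norm_signVector (hκ : 0 < Fintype.card κ) (z : κ → ℤˣ) : ‖signVector z‖ = 1 := by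
  have hd : (0 : ℝ) < Fintype.card κ := by exact_mod_cast hκ
  rw [signVector, norm_smul, EuclideanSpace.norm_eq]
  have hsq (u : ℤˣ) : ((u : ℤ) : ℝ) ^ 2 = 1 := by
    rcases Int.units_eq_one_or u with rfl | rfl <;> simp
  simp only [norm_inv, norm_eq_abs, sq_abs, hsq, sum_const, card_univ, nsmul_eq_mul, mul_one]
  rw [abs_of_nonneg (sqrt_nonneg _), inv_mul_cancel₀ (sqrt_pos.2 hd).ne']

theorem inner_signVector (z w : κ → ℤˣ) :
    ⟪signVector z, signVector w⟫ = signSum (z * w) / Fintype.card κ := by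
  simp only [signVector, inner_smul_left, inner_smul_right, map_inv₀, RCLike.conj_to_real,
    PiLp.inner_apply, RCLike.inner_apply, signSum, Pi.mul_apply, Units.val_mul, Int.cast_mul]
  rw [← mul_assoc, ← mul_inv, mul_self_sqrt (Nat.cast_nonneg _), div_eq_inv_mul]
  simp_rw [mul_comm]

end SignVectors

section ProductAvoidance

variable {ι G : Type*} [Fintype ι] [DecidableEq ι] [Fintype G] [DecidableEq G]

theorem card_filter_apply_mem_mul_card (B : Finset G) (j : ι) :
    #{p : ι → G | p j ∈ B} * Fintype.card G = #B * Fintype.card G ^ Fintype.card ι := by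
  rw [card_eq_sum_card_fiberwise (s := {p : ι → G | p j ∈ B}) (f := fun p => p j) (t := B)
    fun p hp => (mem_filter.1 hp).2]
  have hfiber : ∀ b ∈ B, #{p ∈ ({p : ι → G | p j ∈ B} : Finset _) | p j = b}
      = Fintype.card G ^ (Fintype.card ι - 1) := by
    intro b hb
    rw [filter_filter, ← card_univ (α := G),
      ← Fintype.card_filter_piFinset_const_eq_of_mem _ j (mem_univ b),
      Fintype.piFinset_univ]
    congr 1
    ext p
    simp only [mem_filter, mem_univ, true_and]
    exact ⟨And.right, fun h => ⟨h ▸ hb, h⟩⟩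
  rw [sum_congr rfl hfiber, sum_const, smul_eq_mul, mul_assoc, ← pow_succ,
    Nat.sub_add_cancel (Fintype.card_pos_iff.2 ⟨j⟩)]

theorem card_filter_mul_apply_mem [Group G] (B : Finset G) {i j : ι} (hij : i ≠ j) :
    #{p : ι → G | p i * p j ∈ B} = #{p : ι → G | p j ∈ B} := by
  let e : (ι → G) ≃ (ι → G) :=
    { toFun := fun p => Function.update p j (p i * p j)
      invFun := fun q => Function.update q j ((q i)⁻¹ * q j)
      left_inv := fun p => by ext k; by_cases hk : k = j <;> simp [hk, hij]
      right_inv := fun q => by ext k; by_cases hk : k = j <;> simp [hk, hij] }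
  exact card_equiv e fun p => by simp [e]

theorem exists_forall_mul_apply_notMem [Group G] (B : Finset G)
    (h : Fintype.card ι ^ 2 * #B < Fintype.card G) :
    ∃ p : ι → G, ∀ i j, i ≠ j → p i * p j ∉ B := by
  set n := Fintype.card ι
  set bad := (univ : Finset ι).offDiag.biUnion fun ij => {p : ι → G | p ij.1 * p ij.2 ∈ B}
  have hoffDiag : #(univ : Finset ι).offDiag ≤ n ^ 2 := by
    rw [offDiag_card, card_univ, sq]
    exact Nat.sub_le _ _
  have hbad : #bad * Fintype.card G < #(univ : Finset (ι → G)) * Fintype.card G := calc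
    #bad * Fintype.card G
        ≤ (∑ ij ∈ univ.offDiag, #{p : ι → G | p ij.1 * p ij.2 ∈ B}) * Fintype.card G :=
          Nat.mul_le_mul_right _ card_biUnion_le
    _ = ∑ ij ∈ (univ : Finset ι).offDiag, #B * Fintype.card G ^ n := by
          rw [sum_mul]
          refine sum_congr rfl fun ij hij => ?_
          rw [card_filter_mul_apply_mem B (mem_offDiag.1 hij).2.2, card_filter_apply_mem_mul_card]
    _ ≤ n ^ 2 * #B * Fintype.card G ^ n := by
          rw [sum_const, smul_eq_mul, ← mul_assoc]
          gcongr
    _ < Fintype.card G * Fintype.card G ^ n := Nat.mul_lt_mul_of_pos_right h (by positivity)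
    _ = #(univ : Finset (ι → G)) * Fintype.card G := by
          rw [card_univ, Fintype.card_fun, mul_comm]
  obtain ⟨p, -, hp⟩ := exists_mem_notMem_of_card_lt_card (lt_of_mul_lt_mul_right' hbad)
  refine ⟨p, fun i j hij hmem => hp ?_⟩
  exact mem_biUnion.2
    ⟨(i, j), mem_offDiag.2 ⟨mem_univ _, mem_univ _, hij⟩, mem_filter.2 ⟨mem_univ _, hmem⟩⟩

end ProductAvoidance

theorem exists_unit_vectors_abs_inner_le {ι κ : Type*} [Fintype ι] [Fintype κ]
    (hκ : 0 < Fintype.card κ) {ε : ℝ} (hε : 0 ≤ ε)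
    (h : 2 * Fintype.card ι ^ 2 * exp (-(ε ^ 2 * Fintype.card κ / 2)) < 1) :
    ∃ p : ι → EuclideanSpace ℝ κ, (∀ i, ‖p i‖ = 1) ∧ ∀ i j, i ≠ j → |⟪p i, p j⟫| ≤ ε := by
  classical
  set n := Fintype.card ι
  set d := Fintype.card κ
  set B : Finset (κ → ℤˣ) := {z | ε * d ≤ |signSum z|}
  have hB : n ^ 2 * #B < Fintype.card (κ → ℤˣ) := by
    suffices (n ^ 2 * #B : ℝ) < 2 ^ d by
      rw [Fintype.card_fun, Fintype.card_units_int]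
      exact_mod_cast this
    calc (n ^ 2 * #B : ℝ) ≤ n ^ 2 * (2 * 2 ^ d * exp (-(ε ^ 2 * d / 2))) := by
          gcongr
          exact card_filter_le_abs_signSum_le hε
      _ = 2 * n ^ 2 * exp (-(ε ^ 2 * d / 2)) * 2 ^ d := by ring
      _ < 1 * 2 ^ d := by gcongr
      _ = 2 ^ d := one_mul _
  obtain ⟨z, hz⟩ := exists_forall_mul_apply_notMem B hB
  have hd : (0 : ℝ) < d := by exact_mod_cast hκ
  refine ⟨fun i => signVector (z i), fun i => norm_signVector hκ _, fun i j hij => ?_⟩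
  have hsmall : |signSum (z i * z j)| < ε * d := by
    simpa [B] using hz i j hij
  rw [inner_signVector, abs_div, Nat.abs_cast, div_le_iff₀ hd]
  exact hsmall.le

theorem two_mul_sq_mul_exp_lt_one {n : ℕ} (hn : 2 ≤ n) {x : ℝ} (hx : 8 * log n ≤ x) :
    2 * (n : ℝ) ^ 2 * exp (-(x / 2)) < 1 := by
  have hn' : (2 : ℝ) ≤ n := by exact_mod_cast hn
  have hexp : exp (-(x / 2)) ≤ ((n : ℝ) ^ 4)⁻¹ := by
    rw [← exp_log (by positivity : (0 : ℝ) < n ^ 4), ← exp_neg, exp_le_exp, log_pow]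
    push_cast
    linarith
  calc 2 * (n : ℝ) ^ 2 * exp (-(x / 2)) ≤ 2 * (n : ℝ) ^ 2 * ((n : ℝ) ^ 4)⁻¹ := by gcongr
    _ = 2 / (n : ℝ) ^ 2 := by field_simp
    _ < 1 := by rw [div_lt_one (by positivity)]; nlinarith

/-- Johnson–Lindenstrauss-type near-orthogonality: for any `n > 2` and `ε ∈ (0,1)`,
there exist `n` unit vectors in `ℝ^d`, `d = ⌈8 ln n / ε²⌉`, with pairwise inner
products of absolute value at most `ε`. -/
theorem stmt_0 (n : ℕ) (hn : 2 < n) (ε : ℝ) (hε : ε ∈ Set.Ioo (0 : ℝ) 1) :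
    ∃ p : Fin n → EuclideanSpace ℝ (Fin ⌈8 * Real.log n / ε ^ 2⌉₊),
      (∀ i, ‖p i‖ = 1) ∧ ∀ i j, i ≠ j → |⟪p i, p j⟫| ≤ ε := by
  obtain ⟨hε, -⟩ := hε
  set d := ⌈8 * log n / ε ^ 2⌉₊
  have hlog : 0 < log n := log_pos (by exact_mod_cast hn.trans' one_lt_two)
  have hd : 8 * log n ≤ ε ^ 2 * d := by
    rw [← div_le_iff₀' (by positivity)]
    exact Nat.le_ceil _
  have hd_pos : 0 < d := Nat.ceil_pos.2 (by positivity)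
  exact exists_unit_vectors_abs_inner_le (by simpa) hε.le
    (by simpa using two_mul_sq_mul_exp_lt_one hn.le hd)
end

section
/- Let u be a vector drawn uniformly at random from the unit sphere in ℝ^d and let β ≥ 6. Then the probability that the square of the first coordinate of u exceeds β/d is at most exp(-β/4). -/
/-!
Writing `S` for the cap `{u₁² > β/d}` and `B` for the unit ball, `Pr[S] = vol(C) / vol(B)` where
`C = (0, 1) • S` is the cone over the cap. If `s² ≤ r²` and `1 - 2 s √(β/d) + s² ≤ r²`, every point
of `C` lies within `r` of `s e₁` or of `-s e₁`, so `Pr[S] ≤ 2 rᵈ`. For `β/d ≤ 1/2` take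
`s = √(β/d)`, `r = √(1 - β/d)`, so `2 rᵈ ≤ 2 e^{-β/2}`; for `1/2 < β/d ≤ 1` take
`s = r = 1 / (2 √(β/d))`, which wins because `4 (β/d) e^{-β/(2d)} ≥ 3/2` and `d ≥ 6`; for
`β/d > 1` the cap is empty.
-/

open MeasureTheory

/-- The uniform probability measure on the unit sphere `S^{d-1} ⊂ ℝ^d`: the normalized
surface (Haar-derived) measure. -/
noncomputable def uniformSphere (d : ℕ) :
    Measure (Metric.sphere (0 : EuclideanSpace ℝ (Fin d)) 1) :=
  ((volume : Measure (EuclideanSpace ℝ (Fin d))).toSphere Set.univ)⁻¹ •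
    (volume : Measure (EuclideanSpace ℝ (Fin d))).toSphere

open Metric Set RealInnerProductSpace
open scoped ENNReal Pointwise

section Cover

variable {E : Type*} [NormedAddCommGroup E] [InnerProductSpace ℝ E] {e x : E} {s t r : ℝ}

lemma norm_sub_smul_le_of_mul_norm_le_inner (he : ‖e‖ = 1) (hs : 0 ≤ s) (hr : 0 ≤ r)
    (h₀ : s ^ 2 ≤ r ^ 2) (h₁ : 1 - 2 * s * t + s ^ 2 ≤ r ^ 2) (hx : ‖x‖ ≤ 1)
    (hxe : t * ‖x‖ ≤ ⟪x, e⟫) : ‖x - s • e‖ ≤ r := by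
  have hexpand : ‖x - s • e‖ ^ 2 = ‖x‖ ^ 2 - 2 * (s * ⟪x, e⟫) + s ^ 2 := by
    rw [norm_sub_sq_real, real_inner_smul_right, norm_smul, he, Real.norm_of_nonneg hs, mul_one]
  -- `ρ ↦ ρ² - 2 s t ρ` is convex, so on `[0, 1]` it lies below its chord.
  have hchord : ‖x‖ ^ 2 - 2 * (s * ⟪x, e⟫) + s ^ 2 ≤
      (1 - ‖x‖) * s ^ 2 + ‖x‖ * (1 - 2 * s * t + s ^ 2) := by
    nlinarith [mul_le_mul_of_nonneg_left hxe hs, mul_le_mul_of_nonneg_left hx (norm_nonneg x)]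
  refine (pow_le_pow_iff_left₀ (norm_nonneg _) hr two_ne_zero).1 ?_
  nlinarith [mul_le_mul_of_nonneg_left h₀ (sub_nonneg.2 hx),
    mul_le_mul_of_nonneg_left h₁ (norm_nonneg x)]

lemma mem_closedBall_union_of_mul_norm_le_abs_inner (he : ‖e‖ = 1) (hs : 0 ≤ s) (hr : 0 ≤ r)
    (h₀ : s ^ 2 ≤ r ^ 2) (h₁ : 1 - 2 * s * t + s ^ 2 ≤ r ^ 2) (hx : ‖x‖ ≤ 1)
    (hxe : t * ‖x‖ ≤ |⟪x, e⟫|) : x ∈ closedBall (s • e) r ∪ closedBall (-(s • e)) r := by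
  rcases le_or_gt 0 ⟪x, e⟫ with hpos | hneg
  · left
    rw [mem_closedBall, dist_eq_norm]
    exact norm_sub_smul_le_of_mul_norm_le_inner he hs hr h₀ h₁ hx
      (by rwa [abs_of_nonneg hpos] at hxe)
  · right
    rw [mem_closedBall, dist_eq_norm, ← smul_neg]
    refine norm_sub_smul_le_of_mul_norm_le_inner (by rwa [norm_neg]) hs hr h₀ h₁ hx ?_
    rwa [inner_neg_right, ← abs_of_neg hneg]

lemma Ioo_smul_subset_closedBall_union {A : Set E} (he : ‖e‖ = 1) (hs : 0 ≤ s) (hr : 0 ≤ r)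
    (h₀ : s ^ 2 ≤ r ^ 2) (h₁ : 1 - 2 * s * t + s ^ 2 ≤ r ^ 2)
    (hA : ∀ u ∈ A, ‖u‖ = 1 ∧ t ≤ |⟪u, e⟫|) :
    Ioo (0 : ℝ) 1 • A ⊆ closedBall (s • e) r ∪ closedBall (-(s • e)) r := by
  rintro _ ⟨c, ⟨hc₀, hc₁⟩, u, hu, rfl⟩
  obtain ⟨hu₁, hut⟩ := hA u hu
  have hnorm : ‖c • u‖ = c := by rw [norm_smul, hu₁, mul_one, Real.norm_of_nonneg hc₀.le]
  refine mem_closedBall_union_of_mul_norm_le_abs_inner he hs hr h₀ h₁ (hnorm.trans_le hc₁.le) ?_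
  rw [hnorm, real_inner_smul_left, abs_mul, abs_of_pos hc₀, mul_comm]
  exact mul_le_mul_of_nonneg_left hut hc₀.le

end Cover

section UniformSphere

variable {d : ℕ} {S : Set (sphere (0 : EuclideanSpace ℝ (Fin d)) 1)}

lemma uniformSphere_apply (hd : 0 < d) (hS : MeasurableSet S) :
    uniformSphere d S = volume (Ioo (0 : ℝ) 1 • (Subtype.val '' S)) /
      volume (ball (0 : EuclideanSpace ℝ (Fin d)) 1) := by
  have hd' : (d : ℝ≥0∞) ≠ 0 := by exact_mod_cast hd.ne'
  rw [uniformSphere, Measure.smul_apply, smul_eq_mul, Measure.toSphere_apply' _ hS,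
    Measure.toSphere_apply_univ, finrank_euclideanSpace_fin, ← ENNReal.div_eq_inv_mul,
    ENNReal.mul_div_mul_left _ _ hd' (ENNReal.natCast_ne_top d)]

lemma uniformSphere_le_of_subset_closedBall_union (hd : 0 < d) (hS : MeasurableSet S)
    {a b : EuclideanSpace ℝ (Fin d)} {r : ℝ} (hr : 0 ≤ r)
    (hcover : Ioo (0 : ℝ) 1 • (Subtype.val '' S) ⊆ closedBall a r ∪ closedBall b r) :
    uniformSphere d S ≤ 2 * ENNReal.ofReal (r ^ d) := by
  rw [uniformSphere_apply hd hS]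
  refine ENNReal.div_le_of_le_mul ?_
  calc volume (Ioo (0 : ℝ) 1 • (Subtype.val '' S))
      ≤ volume (closedBall a r) + volume (closedBall b r) :=
        (measure_mono hcover).trans (measure_union_le _ _)
    _ = 2 * ENNReal.ofReal (r ^ d) * volume (ball (0 : EuclideanSpace ℝ (Fin d)) 1) := by
        rw [Measure.addHaar_closedBall _ _ hr, Measure.addHaar_closedBall _ _ hr,
          finrank_euclideanSpace_fin, ← add_mul, ← two_mul]

end UniformSphere

section Estimates

open Real

variable {x : ℝ} {d : ℕ}

lemma two_mul_pow_le_exp_of_four_mul_sq_pow_le {r β : ℝ} (hr : 0 ≤ r)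
    (h : 4 * (r ^ 2) ^ d ≤ exp (-β / 2)) : 2 * r ^ d ≤ exp (-β / 4) := by
  refine (pow_le_pow_iff_left₀ (by positivity) (exp_pos _).le two_ne_zero).1 ?_
  calc (2 * r ^ d) ^ 2 = 4 * (r ^ 2) ^ d := by ring
    _ ≤ exp (-β / 2) := h
    _ = exp (-β / 4) ^ 2 := by rw [sq, ← exp_add]; ring_nf

lemma four_mul_one_sub_pow_le_exp (hx : x ≤ 1) (hxd : 6 ≤ x * d) :
    4 * (1 - x) ^ d ≤ exp (-(x * d) / 2) := by
  have hpow : (1 - x) ^ d ≤ exp (-(x * d)) :=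
    calc (1 - x) ^ d ≤ exp (-x) ^ d :=
          pow_le_pow_left₀ (by linarith) (by linarith [add_one_le_exp (-x)]) d
      _ = exp (-(x * d)) := by rw [← exp_nat_mul]; ring_nf
  have hfour : 4 ≤ exp (x * d / 2) := by linarith [add_one_le_exp (x * d / 2)]
  calc 4 * (1 - x) ^ d ≤ exp (x * d / 2) * exp (-(x * d)) :=
        mul_le_mul hfour hpow (by positivity) (exp_pos _).le
    _ = exp (-(x * d) / 2) := by rw [← exp_add]; ring_nf

lemma three_halves_mul_exp_half_le (hx₀ : 1 / 2 ≤ x) (hx₁ : x ≤ 1) :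
    3 / 2 * exp (x / 2) ≤ 4 * x := by
  -- `exp (x / 2) ≤ (1 - x / 2)⁻¹`, and `3 / 2 ≤ 4 x (1 - x / 2)` is `(2x - 1)(3 - 2x) ≥ 0`.
  have hinv : exp (x / 2) * (1 - x / 2) ≤ 1 := by
    have h := add_one_le_exp (-(x / 2))
    rw [exp_neg] at h
    have hpos := exp_pos (x / 2)
    rw [← mul_le_mul_iff_of_pos_left hpos, mul_inv_cancel₀ hpos.ne'] at h
    linarith
  nlinarith [exp_pos (x / 2), mul_nonneg (sub_nonneg.2 hx₀) (sub_nonneg.2 hx₁)]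

lemma four_mul_inv_pow_le_exp (hx₀ : 1 / 2 ≤ x) (hx₁ : x ≤ 1) (hxd : 6 ≤ x * d) :
    4 * ((4 * x)⁻¹) ^ d ≤ exp (-(x * d) / 2) := by
  have hd : 6 ≤ d := by
    have : (6 : ℝ) ≤ d := by nlinarith [(Nat.cast_nonneg d : (0 : ℝ) ≤ d)]
    exact_mod_cast this
  have hkey : 4 * exp (x * d / 2) ≤ (4 * x) ^ d :=
    calc 4 * exp (x * d / 2) ≤ (3 / 2) ^ d * exp (x / 2) ^ d := by
          rw [← exp_nat_mul, show (d : ℝ) * (x / 2) = x * d / 2 by ring]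
          gcongr
          calc (4 : ℝ) ≤ (3 / 2) ^ 6 := by norm_num
            _ ≤ (3 / 2) ^ d := pow_le_pow_right₀ (by norm_num) hd
      _ = (3 / 2 * exp (x / 2)) ^ d := (mul_pow _ _ _).symm
      _ ≤ (4 * x) ^ d := pow_le_pow_left₀ (by positivity) (three_halves_mul_exp_half_le hx₀ hx₁) d
  rw [inv_pow, ← div_eq_mul_inv, div_le_iff₀ (by positivity)]
  calc (4 : ℝ) = exp (-(x * d) / 2) * (4 * exp (x * d / 2)) := by
        rw [mul_left_comm, ← exp_add]; ring_nf; simp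
    _ ≤ exp (-(x * d) / 2) * (4 * x) ^ d := by gcongr

lemma exists_cover_radius (hx : x ≤ 1) (hxd : 6 ≤ x * d) :
    ∃ s r : ℝ, 0 ≤ s ∧ 0 ≤ r ∧ s ^ 2 ≤ r ^ 2 ∧ 1 - 2 * s * √x + s ^ 2 ≤ r ^ 2 ∧
      4 * (r ^ 2) ^ d ≤ exp (-(x * d) / 2) := by
  have hx₀ : 0 < x := by nlinarith [(Nat.cast_nonneg d : (0 : ℝ) ≤ d)]
  rcases le_or_gt x (1 / 2) with hsmall | hlarge
  · have hs : √x ^ 2 = x := sq_sqrt hx₀.le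
    have hr : √(1 - x) ^ 2 = 1 - x := sq_sqrt (by linarith)
    refine ⟨√x, √(1 - x), sqrt_nonneg _, sqrt_nonneg _, ?_, ?_, ?_⟩ <;> rw [hr]
    · rw [hs]; linarith
    · rw [mul_assoc, ← sq, hs]; linarith
    · exact four_mul_one_sub_pow_le_exp hx hxd
  · have hsqrt : 0 < √x := sqrt_pos.2 hx₀
    refine ⟨(2 * √x)⁻¹, (2 * √x)⁻¹, by positivity, by positivity, le_rfl, ?_, ?_⟩
    · field_simp; linarith
    · rw [inv_pow, mul_pow, sq_sqrt hx₀.le, show (2 : ℝ) ^ 2 = 4 by norm_num]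
      exact four_mul_inv_pow_le_exp hlarge.le hx hxd

end Estimates

lemma sqrt_le_abs_of_lt_sq {a b : ℝ} (h : a < b ^ 2) : √a ≤ |b| :=
  Real.sqrt_sq_eq_abs b ▸ Real.sqrt_le_sqrt h.le

/-- Tail bound for a random unit vector: if `u` is uniform on the unit sphere in `ℝ^d`
and `β ≥ 6`, then `Pr[u₁² > β/d] ≤ exp(−β/4)`. -/
theorem stmt_1 (d : ℕ) (hd : 0 < d) (β : ℝ) (hβ : 6 ≤ β) :
    uniformSphere d {u | β / d < ((u : EuclideanSpace ℝ (Fin d)) ⟨0, hd⟩) ^ 2} ≤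
      ENNReal.ofReal (Real.exp (-β / 4)) := by
  set S := {u : sphere (0 : EuclideanSpace ℝ (Fin d)) 1 |
    β / d < (u : EuclideanSpace ℝ (Fin d)) ⟨0, hd⟩ ^ 2}
  have hβd : β / d * d = β := div_mul_cancel₀ _ (by positivity)
  rcases le_or_gt (β / d) 1 with hx | hx
  · obtain ⟨s, r, hs, hr, h₀, h₁, hpow⟩ := exists_cover_radius hx (hβd ▸ hβ)
    have hS : MeasurableSet S := measurableSet_lt measurable_const (by fun_prop)
    have hcover := Ioo_smul_subset_closedBall_union (A := Subtype.val '' S)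
      (e := EuclideanSpace.single ⟨0, hd⟩ 1) (by simp) hs hr h₀ h₁ <| by
        rintro _ ⟨u, hu, rfl⟩
        refine ⟨mem_sphere_zero_iff_norm.1 u.2, ?_⟩
        simpa [EuclideanSpace.inner_single_right] using sqrt_le_abs_of_lt_sq hu
    calc uniformSphere d S ≤ 2 * ENNReal.ofReal (r ^ d) :=
          uniformSphere_le_of_subset_closedBall_union hd hS hr hcover
      _ = ENNReal.ofReal (2 * r ^ d) := by
          rw [ENNReal.ofReal_mul zero_le_two, ENNReal.ofReal_ofNat]
      _ ≤ ENNReal.ofReal (Real.exp (-β / 4)) :=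
          ENNReal.ofReal_le_ofReal (two_mul_pow_le_exp_of_four_mul_sq_pow_le hr (hβd ▸ hpow))
  · suffices S = ∅ by rw [this, measure_empty]; exact zero_le
    refine eq_empty_of_forall_notMem fun u hu => hu.not_ge (hx.le.trans' ?_)
    have hcoord := PiLp.norm_apply_le (u : EuclideanSpace ℝ (Fin d)) ⟨0, hd⟩
    rw [mem_sphere_zero_iff_norm.1 u.2, Real.norm_eq_abs] at hcoord
    exact sq_le_one_iff_abs_le_one _ |>.2 hcoord
end

section
/- Let n > 2 and ε ∈ (0,1). Then the ε-rank of the n×n identity matrix is at most ⌈8 ln n / ε²⌉; that is, there exists a matrix Φ ∈ ℝ^{n×d} with d = ⌈8 ln n / ε²⌉ such that every entry of I_n − ΦΦᵀ has absolute value at most ε. -/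
open Finset Real
open scoped Matrix

/-!
Take the rows of `Φ` to be sign vectors in `{±1/√d}^d`, so the off-diagonal entries of `ΦΦᵀ` are
correlations `⟨u, w⟩ / d` of vectors `u, w ∈ {±1}^d`. For a fixed `u`, the exponential moment
`∑_w exp (t ⟨u, w⟩) = (2 cosh t)^d ≤ 2^d exp (t² d / 2)` gives, by Chernoff's argument with
`t = ε`, at most `2^(d+1) exp (-ε² d / 2)` vectors `w` with `|⟨u, w⟩| > ε d`. Since
`d ≥ 8 ln n / ε²`, the bad sets of `n - 1` vectors cannot cover all `2^d` sign vectors, so `n`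
pairwise near-orthogonal sign vectors can be chosen greedily.
-/

noncomputable def boolSign (b : Bool) : ℝ := if b then 1 else -1

@[simp] lemma boolSign_mul_self (b : Bool) : boolSign b * boolSign b = 1 := by
  cases b <;> simp [boolSign]

lemma sum_exp_mul_boolSign_mul (a : Bool) (t : ℝ) :
    ∑ b : Bool, exp (t * (boolSign a * boolSign b)) = 2 * cosh t := by
  cases a <;> simp [boolSign, cosh_eq] <;> ring

lemma two_mul_cosh (x : ℝ) : 2 * cosh x = exp x + exp (-x) := by
  rw [cosh_eq, mul_div_cancel₀ _ two_ne_zero]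

lemma card_lt_abs_le_sum_cosh {α : Type*} [Fintype α] (g : α → ℝ) {t : ℝ} (ht : 0 ≤ t) (a : ℝ) :
    (#{x | a < |g x|} : ℝ) ≤ (∑ x, 2 * cosh (t * g x)) * exp (-(t * a)) := by
  have markov : (#{x | a < |g x|} : ℝ) * exp (t * a) ≤ ∑ x, 2 * cosh (t * g x) :=
    calc (#{x | a < |g x|} : ℝ) * exp (t * a)
        ≤ ∑ x ∈ {x | a < |g x|}, exp (t * |g x|) := by
          rw [← nsmul_eq_mul]
          exact card_nsmul_le_sum _ _ _ fun x hx =>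
            exp_le_exp.mpr (mul_le_mul_of_nonneg_left (mem_filter.mp hx).2.le ht)
      _ ≤ ∑ x, exp (t * |g x|) :=
          sum_le_sum_of_subset_of_nonneg (filter_subset _ _) fun _ _ _ => (exp_pos _).le
      _ ≤ ∑ x, 2 * cosh (t * g x) := sum_le_sum fun x _ => by
          have h := exp_abs_le (t * g x)
          rwa [abs_mul, abs_of_nonneg ht, ← two_mul_cosh] at h
  rwa [exp_neg, ← div_eq_mul_inv, le_div_iff₀ (exp_pos _)]

theorem exists_pairwise_of_mul_lt_card {α : Type*} [Fintype α] [DecidableEq α] [Nonempty α]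
    (r : α → α → Prop) [DecidableRel r] [Std.Symm r] (hirrefl : ∀ a, ¬ r a a) {B : ℝ}
    (hB : ∀ a, (#{b | ¬ r a b} : ℝ) ≤ B) {n : ℕ} (hn : n * B < Fintype.card α) :
    ∃ s : Finset α, #s = n + 1 ∧ (s : Set α).Pairwise r := by
  induction n with
  | zero => exact ⟨{Classical.arbitrary α}, card_singleton _, by simp⟩
  | succ m ih =>
    have hB0 : 0 ≤ B := (Nat.cast_nonneg _).trans (hB (Classical.arbitrary α))
    obtain ⟨s, hs, hpair⟩ := ih ((by gcongr; simp : (m : ℝ) * B ≤ (m + 1 : ℕ) * B).trans_lt hn)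
    let bad := s.biUnion fun a => {b | ¬ r a b}
    have hbad : #bad < Fintype.card α := by
      have : (#bad : ℝ) ≤ (m + 1 : ℕ) * B :=
        calc (#bad : ℝ) ≤ ∑ a ∈ s, (#{b | ¬ r a b} : ℝ) := by exact_mod_cast card_biUnion_le
          _ ≤ ∑ _a ∈ s, B := sum_le_sum fun a _ => hB a
          _ = (m + 1 : ℕ) * B := by rw [sum_const, hs, nsmul_eq_mul]
      exact_mod_cast this.trans_lt hn
    obtain ⟨w, hw⟩ : ∃ w, w ∉ bad := by
      by_contra! h
      exact hbad.ne (by rw [eq_univ_of_forall h, card_univ])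
    have hgood : ∀ a ∈ s, r a w := fun a ha => by
      by_contra h
      exact hw (mem_biUnion.mpr ⟨a, ha, mem_filter.mpr ⟨mem_univ _, h⟩⟩)
    have hws : w ∉ s := fun h => hirrefl w (hgood w h)
    refine ⟨insert w s, by rw [card_insert_of_notMem hws, hs], ?_⟩
    rw [coe_insert, Set.pairwise_insert_of_symm]
    exact ⟨hpair, fun a ha _ => Std.Symm.symm _ _ (hgood a ha)⟩

section Correlation

variable {ι : Type*} [Fintype ι]

noncomputable def corr (u w : ι → Bool) : ℝ := ∑ i, boolSign (u i) * boolSign (w i)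

lemma corr_self (u : ι → Bool) : corr u u = Fintype.card ι := by
  simp [corr]

lemma corr_comm (u w : ι → Bool) : corr u w = corr w u := by
  simp only [corr, mul_comm]

variable [DecidableEq ι]

lemma sum_exp_mul_corr (u : ι → Bool) (t : ℝ) :
    ∑ w : ι → Bool, exp (t * corr u w) = (2 * cosh t) ^ Fintype.card ι := by
  simp_rw [corr, mul_sum, exp_sum,
    ← Fintype.prod_sum fun i b => exp (t * (boolSign (u i) * boolSign b)),
    sum_exp_mul_boolSign_mul, prod_const, card_univ]

lemma card_lt_abs_corr_le (u : ι → Bool) {ε : ℝ} (hε : 0 ≤ ε) :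
    (#{w | ε * Fintype.card ι < |corr u w|} : ℝ)
      ≤ 2 ^ (Fintype.card ι + 1) * exp (-(ε ^ 2 * Fintype.card ι) / 2) := by
  set d := Fintype.card ι
  have hcosh : ∑ w, 2 * cosh (ε * corr u w) = 2 * (2 * cosh ε) ^ d :=
    calc ∑ w, 2 * cosh (ε * corr u w)
        = ∑ w, exp (ε * corr u w) + ∑ w, exp (-ε * corr u w) := by
          simp_rw [two_mul_cosh, sum_add_distrib, neg_mul]
      _ = 2 * (2 * cosh ε) ^ d := by
          rw [sum_exp_mul_corr, sum_exp_mul_corr, cosh_neg]; ring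
  calc (#{w | ε * d < |corr u w|} : ℝ)
      ≤ (∑ w, 2 * cosh (ε * corr u w)) * exp (-(ε * (ε * d))) :=
        card_lt_abs_le_sum_cosh _ hε _
    _ ≤ 2 * (2 * exp (ε ^ 2 / 2)) ^ d * exp (-(ε * (ε * d))) := by
        rw [hcosh]
        gcongr
        exact cosh_le_exp_half_sq ε
    _ = 2 ^ (d + 1) * exp (-(ε ^ 2 * d) / 2) := by
        rw [mul_pow, ← exp_nat_mul,
          show -(ε ^ 2 * d) / 2 = d * (ε ^ 2 / 2) + -(ε * (ε * d)) by ring, exp_add]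
        ring

end Correlation

lemma two_mul_sub_one_mul_exp_lt_one {n : ℕ} (hn : 0 < n) {y : ℝ} (hy : 4 * log n ≤ y) :
    2 * ((n - 1 : ℕ) : ℝ) * exp (-y / 2) < 1 := by
  have hn' : (0 : ℝ) < n := by exact_mod_cast hn
  have hexp : exp (-y / 2) ≤ ((n : ℝ) ^ 2)⁻¹ := by
    rw [← exp_log (pow_pos hn' 2), ← exp_neg, exp_le_exp, log_pow]
    push_cast
    linarith
  calc 2 * ((n - 1 : ℕ) : ℝ) * exp (-y / 2) ≤ 2 * (n - 1) * ((n : ℝ) ^ 2)⁻¹ := by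
        rw [Nat.cast_sub hn, Nat.cast_one]
        gcongr
        linarith [(Nat.one_le_cast (α := ℝ)).mpr hn]
    _ < 1 := by
        rw [← div_eq_mul_inv, div_lt_one (by positivity)]
        nlinarith

section SignVectors

variable {ι : Type*} [Fintype ι]

theorem exists_pairwise_abs_corr_le [DecidableEq ι] [Nonempty ι] {ε : ℝ} (hε0 : 0 ≤ ε)
    (hε1 : ε < 1) {n : ℕ} (hn : 2 * n * exp (-(ε ^ 2 * Fintype.card ι) / 2) < 1) :
    ∃ s : Finset (ι → Bool), #s = n + 1 ∧
      (s : Set (ι → Bool)).Pairwise fun u w => |corr u w| ≤ ε * Fintype.card ι := by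
  have : Std.Symm fun u w : ι → Bool => |corr u w| ≤ ε * Fintype.card ι :=
    ⟨fun u w h => by rwa [corr_comm]⟩
  refine exists_pairwise_of_mul_lt_card _ (fun u => ?_)
    (B := 2 ^ (Fintype.card ι + 1) * exp (-(ε ^ 2 * Fintype.card ι) / 2)) (fun u => ?_) ?_
  · rw [corr_self, abs_of_nonneg (Nat.cast_nonneg _), not_le]
    exact mul_lt_of_lt_one_left (by exact_mod_cast Fintype.card_pos) hε1
  · simpa only [not_le] using card_lt_abs_corr_le u hε0
  · rw [Fintype.card_fun, Fintype.card_bool, Nat.cast_pow, Nat.cast_two, pow_succ]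
    nlinarith [pow_pos (two_pos (α := ℝ)) (Fintype.card ι)]

noncomputable def signMatrix {m : Type*} (f : m → ι → Bool) : Matrix m ι ℝ :=
  Matrix.of fun i k => boolSign (f i k) / √(Fintype.card ι)

lemma signMatrix_mul_transpose_apply {m : Type*} (f : m → ι → Bool) (i j : m) :
    (signMatrix f * (signMatrix f)ᵀ) i j = corr (f i) (f j) / Fintype.card ι := by
  simp only [Matrix.mul_apply, Matrix.transpose_apply, signMatrix, Matrix.of_apply, corr, sum_div,
    div_mul_div_comm, mul_self_sqrt (Nat.cast_nonneg _)]

lemma abs_one_sub_signMatrix_mul_transpose_apply_le [Nonempty ι] {m : Type*} [DecidableEq m]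
    (f : m → ι → Bool) {ε : ℝ} (hε : 0 ≤ ε)
    (hf : Pairwise fun i j => |corr (f i) (f j)| ≤ ε * Fintype.card ι) (i j : m) :
    |((1 : Matrix m m ℝ) - signMatrix f * (signMatrix f)ᵀ) i j| ≤ ε := by
  have hd : (0 : ℝ) < Fintype.card ι := by exact_mod_cast Fintype.card_pos
  rw [Matrix.sub_apply, signMatrix_mul_transpose_apply, Matrix.one_apply]
  rcases eq_or_ne i j with rfl | hij
  · rwa [if_pos rfl, corr_self, div_self hd.ne', sub_self, abs_zero]
  · rw [if_neg hij, zero_sub, abs_neg, abs_div, abs_of_pos hd, div_le_iff₀ hd]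
    exact hf hij

end SignVectors

/-- The `ε`-rank of the `n × n` identity matrix is at most `⌈8 ln n / ε²⌉`:
there is `Φ ∈ ℝ^{n×d}`, `d = ⌈8 ln n / ε²⌉`, with every entry of `I − ΦΦᵀ`
of absolute value at most `ε`. -/
theorem stmt_7 (n : ℕ) (hn : 2 < n) (ε : ℝ) (hε : ε ∈ Set.Ioo (0 : ℝ) 1) :
    ∃ Φ : Matrix (Fin n) (Fin ⌈8 * Real.log n / ε ^ 2⌉₊) ℝ,
      ∀ i j, |((1 : Matrix (Fin n) (Fin n) ℝ) - Φ * Φ.transpose) i j| ≤ ε := by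
  obtain ⟨hε0, hε1⟩ := hε
  set d := ⌈8 * log n / ε ^ 2⌉₊
  have hlog : 0 < log n := log_pos (by exact_mod_cast hn.trans' one_lt_two)
  have hd : 8 * log n ≤ ε ^ 2 * d := by
    rw [mul_comm (ε ^ 2), ← div_le_iff₀ (pow_pos hε0 2)]
    exact Nat.le_ceil _
  have : Nonempty (Fin d) := ⟨⟨0, Nat.ceil_pos.mpr (by positivity)⟩⟩
  obtain ⟨s, hs, hpair⟩ := exists_pairwise_abs_corr_le (ι := Fin d) hε0.le hε1 (n := n - 1) (by
    simpa only [Fintype.card_fin] using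
      two_mul_sub_one_mul_exp_lt_one (by omega) (by linarith : 4 * log n ≤ ε ^ 2 * d))
  let e := s.equivFinOfCardEq (hs.trans (Nat.sub_add_cancel (by omega)))
  refine ⟨signMatrix fun i => e.symm i, abs_one_sub_signMatrix_mul_transpose_apply_le _ hε0.le ?_⟩
  intro i j hij
  exact hpair (e.symm i).2 (e.symm j).2 fun h => hij (e.symm.injective (Subtype.ext h))
end

section
/- Let N ⊂ S^{d-1} be a set of points with pairwise Euclidean distances at least √ε for some ε ∈ (0,1). Then for every x ∈ N, the distance from x to the convex hull of N \ {x} is at least ε/2. -/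
/-!
On the unit sphere `⟪x, y⟫ = 1 - ‖x - y‖² / 2`, so every other point of the packing lies in the
half-space `⟪x, ·⟫ ≤ 1 - ε / 2`. The half-space is convex, hence contains the convex hull, and every
point `p` of it satisfies `ε / 2 ≤ ⟪x, x - p⟫ ≤ ‖x - p‖`.
-/

open Classical

open scoped RealInnerProductSpace

section UnitVectors

variable {E : Type*} [NormedAddCommGroup E] [InnerProductSpace ℝ E]

theorem real_inner_eq_one_sub_norm_sub_sq_div_two {x y : E} (hx : ‖x‖ = 1) (hy : ‖y‖ = 1) :
    ⟪x, y⟫ = 1 - ‖x - y‖ ^ 2 / 2 := by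
  rw [norm_sub_sq_real, hx, hy]
  ring

theorem convexHull_subset_setOf_inner_le (x : E) {s : Set E} {c : ℝ} (h : ∀ y ∈ s, ⟪x, y⟫ ≤ c) :
    convexHull ℝ s ⊆ {p | ⟪x, p⟫ ≤ c} :=
  convexHull_min h (convex_halfSpace_le (innerₛₗ ℝ x).isLinear c)

theorem le_dist_of_inner_le_one_sub {x p : E} {δ : ℝ} (hx : ‖x‖ = 1) (h : ⟪x, p⟫ ≤ 1 - δ) :
    δ ≤ dist x p := by
  have hinner : ⟪x, x - p⟫ = 1 - ⟪x, p⟫ := by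
    rw [inner_sub_right, real_inner_self_eq_norm_sq, hx, one_pow]
  calc δ ≤ ⟪x, x - p⟫ := by linarith
    _ ≤ ‖x‖ * ‖x - p‖ := real_inner_le_norm _ _
    _ = dist x p := by rw [hx, one_mul, dist_eq_norm]

theorem ofReal_le_infEDist_convexHull_of_norm_eq_one {x : E} {s : Set E} {δ : ℝ}
    (hx : ‖x‖ = 1) (hs : ∀ y ∈ s, ‖y‖ = 1) (hsep : ∀ y ∈ s, δ ≤ ‖x - y‖ ^ 2) :
    ENNReal.ofReal (δ / 2) ≤ Metric.infEDist x (convexHull ℝ s) := by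
  have hhalf : convexHull ℝ s ⊆ {p | ⟪x, p⟫ ≤ 1 - δ / 2} :=
    convexHull_subset_setOf_inner_le x fun y hy => by
      rw [real_inner_eq_one_sub_norm_sub_sq_div_two hx (hs y hy)]
      linarith [hsep y hy]
  refine Metric.le_infEDist.2 fun p hp => ?_
  rw [edist_dist]
  exact ENNReal.ofReal_le_ofReal (le_dist_of_inner_le_one_sub hx (hhalf hp))

end UnitVectors

theorem stmt_10_general (d : ℕ) (ε : ℝ)
    (N : Finset (EuclideanSpace ℝ (Fin d)))
    (hsphere : ∀ x ∈ N, ‖x‖ = 1)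
    (hpack : ∀ x ∈ N, ∀ y ∈ N, x ≠ y → Real.sqrt ε ≤ ‖x - y‖) :
    ∀ x ∈ N, ENNReal.ofReal (ε / 2) ≤
      EMetric.infEdist x (convexHull ℝ (↑(N.erase x) : Set (EuclideanSpace ℝ (Fin d)))) := by
  intro x hx
  refine ofReal_le_infEDist_convexHull_of_norm_eq_one (hsphere x hx)
    (fun y hy => hsphere y (Finset.mem_of_mem_erase hy)) fun y hy => ?_
  obtain ⟨hyx, hyN⟩ := Finset.mem_erase.1 hy
  exact (Real.sqrt_le_iff.1 (hpack x hx y hyN hyx.symm)).2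

/-- If `N ⊂ S^{d-1}` has pairwise distances at least `√ε`, then each `x ∈ N` is at
distance at least `ε/2` from the convex hull of `N \ {x}`. -/
theorem stmt_10 (d : ℕ) (ε : ℝ) (hε : ε ∈ Set.Ioo (0 : ℝ) 1)
    (N : Finset (EuclideanSpace ℝ (Fin d)))
    (hsphere : ∀ x ∈ N, ‖x‖ = 1)
    (hpack : ∀ x ∈ N, ∀ y ∈ N, x ≠ y → Real.sqrt ε ≤ ‖x - y‖) :
    ∀ x ∈ N, ENNReal.ofReal (ε / 2) ≤
      EMetric.infEdist x (convexHull ℝ (↑(N.erase x) : Set (EuclideanSpace ℝ (Fin d)))) :=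
  stmt_10_general d ε N hsphere hpack
end
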